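/- arXiv:1601.02939 — 3 statements merged into one kernel-verified Lean document; each statement's English description precedes it below -/
import Mathlib

section
/- For a finite simple hypergraph H (a finite family of sets, none of which contains another), the transversal of the transversal hypergraph equals H itself: Tr(Tr H) = H. -/
variable {α : Type*} [DecidableEq α]

/-- `T` is a hitting set of the family `S`. -/
def Hits (S : Set (Finset α)) (T : Finset α) : Prop := ∀ s ∈ S, (T ∩ s).Nonempty

/-- `T` is a minimal hitting set (transversal) of `S`. -/
def IsMHS (S : Set (Finset α)) (T : Finset α) : Prop :=
  Hits S T ∧ ∀ T' ⊂ T, ¬ Hits S T'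

/-- The transversal hypergraph: the family of all minimal hitting sets of `S`. -/
def Tr (S : Set (Finset α)) : Set (Finset α) := {T | IsMHS S T}

/-- The inclusion-minimal members of a family. -/
def minFam (F : Set (Finset α)) : Set (Finset α) := {e ∈ F | ∀ f ∈ F, f ⊆ e → f = e}

lemma exists_mhs_subset (S : Set (Finset α)) :
    ∀ T : Finset α, Hits S T → ∃ T' ⊆ T, IsMHS S T' := by
  intro T
  induction T using Finset.strongInductionOn with
  | _ T ih =>
    intro hT
    by_cases h : ∀ T' ⊂ T, ¬ Hits S T'
    · exact ⟨T, Finset.Subset.refl T, hT, h⟩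
    · push_neg at h
      obtain ⟨T', hsub, hT'⟩ := h
      obtain ⟨T'', hsub', hmhs⟩ := ih T' hsub hT'
      exact ⟨T'', hsub'.trans hsub.subset, hmhs⟩

/-- For a finite simple hypergraph, `Tr (Tr H) = H`. -/
theorem tr_tr_eq_self (H : Set (Finset α)) (hfin : H.Finite)
    (hsimple : ∀ e₁ ∈ H, ∀ e₂ ∈ H, e₁ ⊆ e₂ → e₁ = e₂) :
    Tr (Tr H) = H := by
  classical
  set V : Finset α := hfin.toFinset.sup id with hV
  have hVmem : ∀ e ∈ H, e ⊆ V := fun e he =>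
    Finset.le_sup (f := id) (hfin.mem_toFinset.2 he)
  -- Sublemma A: if every edge has an element outside A, there is a transversal avoiding A
  have subA : ∀ A : Finset α, (∀ e ∈ H, (e \ A).Nonempty) →
      ∃ T' ∈ Tr H, T' ∩ A = ∅ := by
    intro A hA
    have hhit : Hits H (V \ A) := by
      intro e he
      obtain ⟨x, hx⟩ := hA e he
      rw [Finset.mem_sdiff] at hx
      exact ⟨x, Finset.mem_inter.2 ⟨Finset.mem_sdiff.2 ⟨hVmem e he hx.1, hx.2⟩, hx.1⟩⟩
    obtain ⟨T', hsub, hmhs⟩ := exists_mhs_subset H _ hhit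
    refine ⟨T', hmhs, ?_⟩
    rw [Finset.eq_empty_iff_forall_notMem]
    intro x hx
    rw [Finset.mem_inter] at hx
    exact (Finset.mem_sdiff.1 (hsub hx.1)).2 hx.2
  -- H ⊆ Tr (Tr H)
  have hHsub : ∀ e ∈ H, e ∈ Tr (Tr H) := by
    intro e he
    constructor
    · intro T' hT'
      obtain ⟨x, hx⟩ := hT'.1 e he
      rw [Finset.mem_inter] at hx
      exact ⟨x, Finset.mem_inter.2 ⟨hx.2, hx.1⟩⟩
    · intro e' he' hhits
      have hall : ∀ f ∈ H, (f \ e').Nonempty := by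
        intro f hf
        rw [Finset.sdiff_nonempty]
        intro hfe'
        have := hsimple f hf e he (hfe'.trans he'.subset)
        subst this
        exact absurd (hfe'.trans he'.subset) (fun _ => he'.not_subset hfe')
      obtain ⟨T', hT', hdisj⟩ := subA e' hall
      obtain ⟨x, hx⟩ := hhits T' hT'
      rw [Finset.mem_inter] at hx
      exact absurd (Finset.mem_inter.2 ⟨hx.2, hx.1⟩) (by simp [hdisj])
  ext T
  constructor
  · rintro ⟨hhits, hmin⟩
    -- exists e ∈ H with e ⊆ T
    obtain ⟨e, he, hesub⟩ : ∃ e ∈ H, e ⊆ T := by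
      by_contra h
      push_neg at h
      have hall : ∀ f ∈ H, (f \ T).Nonempty := fun f hf =>
        Finset.sdiff_nonempty.2 (h f hf)
      obtain ⟨T', hT', hdisj⟩ := subA T hall
      obtain ⟨x, hx⟩ := hhits T' hT'
      rw [Finset.mem_inter] at hx
      exact absurd (Finset.mem_inter.2 ⟨hx.2, hx.1⟩) (by simp [hdisj])
    have heTr := hHsub e he
    rcases eq_or_ne e T with rfl | hne
    · exact he
    · exact absurd heTr.1 (hmin e (lt_of_le_of_ne hesub hne))
  · exact hHsub T
end

section
/- Let H be a hypergraph with vertex set V and let e be an edge of H. Then the family C(e) = {(V \ f) ∪ {i} : f ∈ H, i ∈ f ∩ e} is a full cover of Tr H. -/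
variable {α : Type*} [DecidableEq α]

/-- `C(e) = {(V \ f) ∪ {i} : f ∈ H, i ∈ f ∩ e}` is a full cover of `Tr H`. -/
theorem fullCover_of_edge [Fintype α] (H : Set (Finset α)) (hfin : H.Finite)
    (hHne : H.Nonempty) (hne : ∀ s ∈ H, s.Nonempty) (e : Finset α) (he : e ∈ H) :
    ∀ T ∈ Tr H, ∃ c ∈ ({c | ∃ f ∈ H, ∃ i ∈ f ∩ e, c = (Finset.univ \ f) ∪ {i}} :
      Set (Finset α)), T ⊆ c := by
  rintro T ⟨hT, hmin⟩
  obtain ⟨i, hi⟩ := hT e he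
  obtain ⟨hiT, hie⟩ := Finset.mem_inter.1 hi
  have hsub : T.erase i ⊂ T := Finset.erase_ssubset hiT
  have hnh := hmin _ hsub
  simp only [Hits, not_forall] at hnh
  obtain ⟨f, hf, hfe⟩ := hnh
  rw [Finset.not_nonempty_iff_eq_empty] at hfe
  have hif : i ∈ f := by
    obtain ⟨j, hj⟩ := hT f hf
    obtain ⟨hjT, hjf⟩ := Finset.mem_inter.1 hj
    by_cases h : j = i
    · exact h ▸ hjf
    · exact absurd (Finset.mem_inter.2 ⟨Finset.mem_erase.2 ⟨h, hjT⟩, hjf⟩)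
        (by simp [hfe])
  refine ⟨(Finset.univ \ f) ∪ {i}, ⟨f, hf, i, Finset.mem_inter.2 ⟨hif, hie⟩, rfl⟩, ?_⟩
  intro x hx
  by_cases h : x = i
  · simp [h]
  · have : x ∉ f := fun hxf => by
      have : x ∈ T.erase i ∩ f := Finset.mem_inter.2 ⟨Finset.mem_erase.2 ⟨h, hx⟩, hxf⟩
      simp [hfe] at this
    simp [this]
end

section
/- Berge's algorithm is correct: if S = {s_1,…,s_n} is a finite family of nonempty finite sets, and T is computed by starting with T_1 = {{e} : e ∈ s_1} and iteratively setting T_i = min{ t ∪ {e} : t ∈ T_{i−1}, e ∈ s_i } for i = 2,…,n, then T_n equals the family of all minimal hitting sets of S. -/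
/-!
The invariant is that after the sets `s₁, …, sᵢ` have been processed the family is
`Tr {s₁, …, sᵢ}`. For the step from `S` to `insert s S`: every `t ∪ {e}` with `t ∈ Tr S` and
`e ∈ s` hits `insert s S`, and conversely every hitting set `T` of `insert s S` contains one of
them (a minimal hitting set of `S` inside `T` plus a point of `T ∩ s`). A family of hitting sets
lying below every hitting set has exactly the minimal hitting sets as its minimal members.
-/

variable {α : Type*} [DecidableEq α]

/-- One step of Berge's algorithm: extend each partial transversal by one element of
the new set, then minimize. -/
def bergeStep (T : Set (Finset α)) (s : Finset α) : Set (Finset α) :=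
  minFam {u | ∃ t ∈ T, ∃ e ∈ s, u = t ∪ {e}}

section Transversal

variable {S : Set (Finset α)} {s T : Finset α}

lemma Hits.mono {T' : Finset α} (hT : Hits S T) (h : T ⊆ T') : Hits S T' :=
  fun s hs => (hT s hs).mono (Finset.inter_subset_inter h le_rfl)

lemma hits_insert_iff : Hits (insert s S) T ↔ (T ∩ s).Nonempty ∧ Hits S T :=
  Set.forall_mem_insert

lemma hits_singleton_iff : Hits {s} T ↔ (T ∩ s).Nonempty := by
  simp [Hits]

lemma isMHS_iff_minimal : IsMHS S T ↔ Minimal (Hits S) T :=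
  minimal_iff_forall_lt.symm

lemma Hits.exists_isMHS_subset (hT : Hits S T) : ∃ T' ⊆ T, IsMHS S T' := by
  obtain ⟨T', hT'T, hmin⟩ := exists_minimal_le_of_wellFoundedLT _ T hT
  exact ⟨T', hT'T, isMHS_iff_minimal.2 hmin⟩

lemma minFam_eq_Tr {F : Set (Finset α)} (hF : ∀ u ∈ F, Hits S u)
    (hbelow : ∀ T, Hits S T → ∃ u ∈ F, u ⊆ T) : minFam F = Tr S := by
  ext T
  constructor
  · rintro ⟨hTF, hmin⟩
    refine ⟨hF T hTF, fun T' hT'T hT' => ?_⟩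
    obtain ⟨u, huF, huT'⟩ := hbelow T' hT'
    exact not_subset_of_ssubset hT'T (hmin u huF (huT'.trans hT'T.subset) ▸ huT')
  · intro hT
    have hmin : ∀ u ∈ F, u ⊆ T → u = T := fun u huF huT =>
      (isMHS_iff_minimal.1 hT).eq_of_le (hF u huF) huT
    obtain ⟨u, huF, huT⟩ := hbelow T hT.1
    exact ⟨hmin u huF huT ▸ huF, hmin⟩

lemma Tr_singleton (s : Finset α) :
    Tr ({s} : Set (Finset α)) = {u : Finset α | ∃ e ∈ s, u = {e}} := by
  have hantichain : minFam {u : Finset α | ∃ e ∈ s, u = {e}} = {u | ∃ e ∈ s, u = {e}} := by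
    refine Set.sep_eq_self_iff_mem_true.2 fun u hu => ?_
    rintro _ ⟨e', -, rfl⟩ he'u
    obtain ⟨e, -, rfl⟩ := hu
    rw [Finset.singleton_subset_singleton.1 he'u]
  rw [← minFam_eq_Tr, hantichain]
  · rintro _ ⟨e, he, rfl⟩
    exact hits_singleton_iff.2 ⟨e, by simpa using he⟩
  · intro T hT
    obtain ⟨e, he⟩ := hits_singleton_iff.1 hT
    rw [Finset.mem_inter] at he
    exact ⟨{e}, ⟨e, he.2, rfl⟩, Finset.singleton_subset_iff.2 he.1⟩

lemma bergeStep_Tr (S : Set (Finset α)) (s : Finset α) :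
    bergeStep (Tr S) s = Tr (insert s S) := by
  refine minFam_eq_Tr ?_ ?_
  · rintro _ ⟨t, ht, e, he, rfl⟩
    exact hits_insert_iff.2
      ⟨⟨e, by simpa using he⟩, ht.1.mono Finset.subset_union_left⟩
  · intro T hT
    obtain ⟨⟨e, he⟩, hTS⟩ := hits_insert_iff.1 hT
    rw [Finset.mem_inter] at he
    obtain ⟨t, htT, ht⟩ := hTS.exists_isMHS_subset
    exact ⟨t ∪ {e}, ⟨t, ht, e, he.2, rfl⟩,
      Finset.union_subset htT (Finset.singleton_subset_iff.2 he.1)⟩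

lemma foldl_bergeStep_Tr (l : List (Finset α)) (S : Set (Finset α)) :
    l.foldl bergeStep (Tr S) = Tr (S ∪ {s | s ∈ l}) := by
  induction l generalizing S with
  | nil => simp
  | cons s l ih =>
    rw [List.foldl_cons, bergeStep_Tr, ih]
    congr 1
    ext x
    simp only [Set.mem_union, Set.mem_insert_iff, Set.mem_ofPred_eq, List.mem_cons]
    tauto

end Transversal

theorem berge_correct_general (s₁ : Finset α) (rest : List (Finset α)) :
    rest.foldl bergeStep {u | ∃ e ∈ s₁, u = {e}}
      = Tr {s | s ∈ s₁ :: rest} := by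
  rw [← Tr_singleton, foldl_bergeStep_Tr]
  congr 1
  ext x
  simp

/-- Berge's algorithm is correct: iterating `bergeStep` starting from the singletons of
the first set yields exactly the minimal hitting sets. -/
theorem berge_correct (s₁ : Finset α) (rest : List (Finset α))
    (hne : ∀ s ∈ s₁ :: rest, Finset.Nonempty s) :
    rest.foldl bergeStep {u | ∃ e ∈ s₁, u = {e}}
      = Tr {s | s ∈ s₁ :: rest} :=
  berge_correct_general s₁ rest
end
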